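/- Let R be a commutative ring, N an R-module, M = N[[X]], and let D, T, m : M → M be R[[X]]-linear maps satisfying: (i) D ∘ D = 0; (ii) T(M) ⊆ X·M; (iii) D ∘ T = T ∘ D; (iv) D(m(Q)) = T(Q) + Q + m(D(Q)) for all Q ∈ M. Then every D-closed element of M is D-exact: if D(Q) = 0 then Q = D(m(B(Q))), where B = Σ_{n≥0} (−1)^n T^n. In particular the homology ker(D)/im(D) is zero. -/

import Mathlib

/-!
Write `B Q = Σ (-1)ⁿ Tⁿ Q`; the series converges `X`-adically because `T` raises the `X`-order,
and every map commuting with multiplication by `X` is `X`-adically continuous, so it may be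
applied termwise. Termwise, `T B Q = Q - B Q` (the Neumann series inverts `1 + T`) and
`D B Q = B (D Q) = 0` for a closed `Q`. Hence the bracket identity gives
`D (m (B Q)) = T (B Q) + B Q + m (D (B Q)) = Q`.
-/

/-- Multiplication by `X` on `N[[X]]`, modelled as sequences `ℕ → N`. -/
def shiftX (R N : Type*) [CommRing R] [AddCommGroup N] [Module R N] :
    (ℕ → N) →ₗ[R] (ℕ → N) where
  toFun f := fun n => if n = 0 then 0 else f (n - 1)
  map_add' f g := by funext n; by_cases h : n = 0 <;> simp [h]
  map_smul' c f := by funext n; by_cases h : n = 0 <;> simp [h]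

namespace PowerSeriesModule

variable {R N : Type*} [CommRing R] [AddCommGroup N] [Module R N]

lemma shiftX_pow_apply (k : ℕ) (h : ℕ → N) (j : ℕ) :
    (shiftX R N ^ k) h j = if j < k then 0 else h (j - k) := by
  induction k generalizing j with
  | zero => simp
  | succ k ih =>
    rw [pow_succ', Module.End.mul_apply]
    change (if j = 0 then 0 else (shiftX R N ^ k) h (j - 1)) = _
    rw [ih]
    split_ifs <;> first | rfl | omega | (congr 1; omega)

/-- `f ∈ X ^ k • N[[X]]`. -/
def VanishesBelow (k : ℕ) (f : ℕ → N) : Prop := ∀ j < k, f j = 0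

lemma VanishesBelow.eq_shiftX_pow {k : ℕ} {g : ℕ → N} (hg : VanishesBelow k g) :
    g = (shiftX R N ^ k) (fun j => g (j + k)) := by
  funext j
  rw [shiftX_pow_apply]
  split_ifs with hj
  · exact hg j hj
  · congr 1; omega

variable {L : (ℕ → N) →ₗ[R] (ℕ → N)}

lemma map_shiftX_pow (hL : Commute L (shiftX R N)) (k : ℕ) (h : ℕ → N) :
    L ((shiftX R N ^ k) h) = (shiftX R N ^ k) (L h) :=
  LinearMap.congr_fun (hL.pow_right k) h

lemma VanishesBelow.map (hL : Commute L (shiftX R N)) {k : ℕ} {g : ℕ → N}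
    (hg : VanishesBelow k g) : VanishesBelow k (L g) := by
  intro j hj
  rw [hg.eq_shiftX_pow (R := R), map_shiftX_pow hL, shiftX_pow_apply, if_pos hj]

lemma VanishesBelow.map_succ (hL : Commute L (shiftX R N)) (hL0 : ∀ f, L f 0 = 0)
    {k : ℕ} {g : ℕ → N} (hg : VanishesBelow k g) : VanishesBelow (k + 1) (L g) := by
  intro j hj
  rw [hg.eq_shiftX_pow (R := R), map_shiftX_pow hL, shiftX_pow_apply]
  split_ifs with hjk
  · rfl
  · rw [show j - k = 0 by omega]
    exact hL0 _

lemma vanishesBelow_pow_apply (hL : Commute L (shiftX R N)) (hL0 : ∀ f, L f 0 = 0)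
    (n : ℕ) (f : ℕ → N) : VanishesBelow n ((L ^ n) f) := by
  induction n with
  | zero => intro j hj; omega
  | succ n ih =>
    rw [pow_succ', Module.End.mul_apply]
    exact ih.map_succ hL hL0

/-- The `X`-adic sum `Σ F n`; when `F n ∈ X ^ n • N[[X]]`, only `n ≤ j` contribute to the
coefficient of `X ^ j`. -/
def seriesSum (F : ℕ → ℕ → N) : ℕ → N := fun j => ∑ n ∈ Finset.range (j + 1), F n j

lemma seriesSum_neg (F : ℕ → ℕ → N) : seriesSum (fun n => -F n) = -seriesSum F := by
  funext j
  simp [seriesSum, Finset.sum_neg_distrib]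

variable {F : ℕ → ℕ → N}

lemma seriesSum_sub_sum_vanishesBelow (hF : ∀ n, VanishesBelow n (F n)) (J : ℕ) :
    VanishesBelow (J + 1) (seriesSum F - ∑ n ∈ Finset.range (J + 1), F n) := by
  intro j hj
  rw [Pi.sub_apply, Finset.sum_apply, sub_eq_zero]
  refine Finset.sum_subset (Finset.range_subset_range.2 (by omega)) fun n _ hn => ?_
  exact hF n j (by simpa using hn)

lemma map_seriesSum (hL : Commute L (shiftX R N)) (hF : ∀ n, VanishesBelow n (F n)) :
    L (seriesSum F) = seriesSum fun n => L (F n) := by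
  funext j
  have h := (seriesSum_sub_sum_vanishesBelow hF j).map hL j (Nat.lt_succ_self j)
  rwa [map_sub, Pi.sub_apply, sub_eq_zero, map_sum, Finset.sum_apply] at h

lemma seriesSum_succ_add (hF : ∀ n, VanishesBelow n (F n)) :
    seriesSum (fun n => F (n + 1)) + F 0 = seriesSum F := by
  funext j
  have htop : F (j + 1) j = 0 := hF (j + 1) j (Nat.lt_succ_self j)
  simp only [seriesSum, Pi.add_apply]
  rw [← Finset.sum_range_succ' (fun n => F n j), Finset.sum_range_succ, htop, add_zero]

variable (T : (ℕ → N) →ₗ[R] (ℕ → N))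

def neumannSeries (Q : ℕ → N) : ℕ → N :=
  seriesSum fun n => ((-1 : ℤ) ^ n) • (T ^ n) Q

variable {T}

lemma neumannSeries_terms_vanishesBelow (hT : Commute T (shiftX R N)) (hT0 : ∀ f, T f 0 = 0)
    (Q : ℕ → N) (n : ℕ) : VanishesBelow n (((-1 : ℤ) ^ n) • (T ^ n) Q) := by
  intro j hj
  rw [Pi.smul_apply, vanishesBelow_pow_apply hT hT0 n Q j hj, smul_zero]

lemma map_neumannSeries (hL : Commute L (shiftX R N)) (hT : Commute T (shiftX R N))
    (hT0 : ∀ f, T f 0 = 0) (hLT : Commute L T) (Q : ℕ → N) :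
    L (neumannSeries T Q) = neumannSeries T (L Q) := by
  rw [neumannSeries, map_seriesSum hL (neumannSeries_terms_vanishesBelow hT hT0 Q)]
  congr 1
  funext n
  rw [map_zsmul, ← Module.End.mul_apply, (hLT.pow_right n).eq, Module.End.mul_apply]

lemma neumannSeries_zero : neumannSeries T 0 = 0 := by
  funext j
  simp [neumannSeries, seriesSum]

lemma neumannSeries_add_map (hT : Commute T (shiftX R N)) (hT0 : ∀ f, T f 0 = 0)
    (Q : ℕ → N) : neumannSeries T Q + T (neumannSeries T Q) = Q := by
  have hF := neumannSeries_terms_vanishesBelow hT hT0 Q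
  have hshift : (fun n => T (((-1 : ℤ) ^ n) • (T ^ n) Q))
      = fun n => -(((-1 : ℤ) ^ (n + 1)) • (T ^ (n + 1)) Q) := by
    funext n
    rw [map_zsmul, ← Module.End.mul_apply, ← pow_succ', pow_succ (-1 : ℤ), mul_neg_one, neg_smul, neg_neg]
  rw [neumannSeries, map_seriesSum hT hF, hshift, seriesSum_neg, ← seriesSum_succ_add hF]
  simp

end PowerSeriesModule

open PowerSeriesModule in
theorem statement1_general {R N : Type*} [CommRing R] [AddCommGroup N] [Module R N]
    (D T m : (ℕ → N) →ₗ[R] (ℕ → N))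
    (hDX : D ∘ₗ shiftX R N = shiftX R N ∘ₗ D)
    (hTX : T ∘ₗ shiftX R N = shiftX R N ∘ₗ T)
    (hT0 : ∀ f : ℕ → N, T f 0 = 0)
    (hDT : D ∘ₗ T = T ∘ₗ D)
    (hbracket : ∀ Q : ℕ → N, D (m Q) = T Q + Q + m (D Q)) :
    (∀ Q : ℕ → N, D Q = 0 →
      Q = D (m (fun j => ∑ n ∈ Finset.range (j + 1), ((-1 : ℤ) ^ n) • ((T ^ n) Q j)))) ∧
    (∀ Q : ℕ → N, D Q = 0 → ∃ P : ℕ → N, D P = Q) := by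
  have closed_eq : ∀ Q : ℕ → N, D Q = 0 → Q = D (m (neumannSeries T Q)) := by
    intro Q hQ
    have hDB : D (neumannSeries T Q) = 0 := by
      rw [map_neumannSeries hDX hTX hT0 hDT, hQ, neumannSeries_zero]
    rw [hbracket, hDB, map_zero, add_zero, add_comm, neumannSeries_add_map hTX hT0]
  exact ⟨closed_eq, fun Q hQ => ⟨_, (closed_eq Q hQ).symm⟩⟩

/-- with `D, T, m : N[[X]] → N[[X]]` `R[[X]]`-linear, `D∘D = 0`,
`T(M) ⊆ X·M`, `D∘T = T∘D`, and `D(m Q) = T Q + Q + m (D Q)`, every `D`-closed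
element `Q` satisfies `Q = D (m (B Q))` with `B = Σ (−1)^n Tⁿ` (defined
coefficientwise); in particular every closed element is exact, i.e. the homology
`ker D / im D` vanishes. -/
theorem statement1 {R N : Type*} [CommRing R] [AddCommGroup N] [Module R N]
    (D T m : (ℕ → N) →ₗ[R] (ℕ → N))
    (hDX : D ∘ₗ shiftX R N = shiftX R N ∘ₗ D)
    (hTX : T ∘ₗ shiftX R N = shiftX R N ∘ₗ T)
    (hmX : m ∘ₗ shiftX R N = shiftX R N ∘ₗ m)
    (hDD : D ∘ₗ D = 0)
    (hT0 : ∀ f : ℕ → N, T f 0 = 0)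
    (hDT : D ∘ₗ T = T ∘ₗ D)
    (hbracket : ∀ Q : ℕ → N, D (m Q) = T Q + Q + m (D Q)) :
    (∀ Q : ℕ → N, D Q = 0 →
      Q = D (m (fun j => ∑ n ∈ Finset.range (j + 1), ((-1 : ℤ) ^ n) • ((T ^ n) Q j)))) ∧
    (∀ Q : ℕ → N, D Q = 0 → ∃ P : ℕ → N, D P = Q) :=
  statement1_general D T m hDX hTX hT0 hDT hbracket
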